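/- arXiv:1403.6702 — 5 statements merged into one kernel-verified Lean document; each statement's English description precedes it below -/
import Mathlib

section
/- Consider the polynomial system in variables x₁,…,x₁₀ and positive parameters k₁,…,k₁₂ given by the ten mass-action rate functions of the 2-layer cascade network of Example 2.1. Then every one of these ten polynomials lies in the ideal generated by the six binomials: k₁x₁x₅ − (k₂+k₃)x₇, k₄x₂x₆ − (k₅+k₆)x₉, k₇x₂x₃ − (k₈+k₉)x₈, k₁₀x₄x₆ − (k₁₁+k₁₂)x₁₀, k₃x₇ − k₆x₉, k₉x₈ − k₁₂x₁₀. -/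
open MvPolynomial

/-- The ten mass-action rate polynomials of the 2-layer cascade network of
Example 2.1, in variables `X 0, …, X 9` corresponding to the concentrations
of `S₀, S₁, P₀, P₁, E, F, ES₀, S₁P₀, FS₁, FP₁`, with rate constants
`k 0, …, k 11`. -/
noncomputable def cascadeF (k : Fin 12 → ℝ) : Fin 10 → MvPolynomial (Fin 10) ℝ :=
  ![ -(C (k 0) * X 0 * X 4) + C (k 1) * X 6 + C (k 5) * X 8,
     C (k 2) * X 6 - C (k 3) * X 1 * X 5 + C (k 4) * X 8
       - C (k 6) * X 1 * X 2 + C (k 7) * X 7 + C (k 8) * X 7,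
     -(C (k 6) * X 1 * X 2) + C (k 7) * X 7 + C (k 11) * X 9,
     C (k 8) * X 7 - C (k 9) * X 3 * X 5 + C (k 10) * X 9,
     -(C (k 0) * X 0 * X 4) + C (k 1) * X 6 + C (k 2) * X 6,
     -(C (k 3) * X 1 * X 5) + C (k 4) * X 8 + C (k 5) * X 8
       - C (k 9) * X 3 * X 5 + C (k 10) * X 9 + C (k 11) * X 9,
     C (k 0) * X 0 * X 4 - C (k 1) * X 6 - C (k 2) * X 6,
     C (k 6) * X 1 * X 2 - C (k 7) * X 7 - C (k 8) * X 7,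
     C (k 3) * X 1 * X 5 - C (k 4) * X 8 - C (k 5) * X 8,
     C (k 9) * X 3 * X 5 - C (k 10) * X 9 - C (k 11) * X 9 ]

/-- The six binomials generating the steady state ideal of the 2-layer
cascade:  `k₁x₁x₅ − (k₂+k₃)x₇`, `k₄x₂x₆ − (k₅+k₆)x₉`, `k₇x₂x₃ − (k₈+k₉)x₈`,
`k₁₀x₄x₆ − (k₁₁+k₁₂)x₁₀`, `k₃x₇ − k₆x₉`, `k₉x₈ − k₁₂x₁₀`. -/
noncomputable def cascadeB (k : Fin 12 → ℝ) : Fin 6 → MvPolynomial (Fin 10) ℝ :=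
  ![ C (k 0) * X 0 * X 4 - C (k 1 + k 2) * X 6,
     C (k 3) * X 1 * X 5 - C (k 4 + k 5) * X 8,
     C (k 6) * X 1 * X 2 - C (k 7 + k 8) * X 7,
     C (k 9) * X 3 * X 5 - C (k 10 + k 11) * X 9,
     C (k 2) * X 6 - C (k 5) * X 8,
     C (k 8) * X 7 - C (k 11) * X 9 ]

/-- Every one of the ten mass-action rate polynomials of the 2-layer cascade
lies in the ideal generated by the six binomials. -/
theorem rate_polys_mem_binomial_ideal (k : Fin 12 → ℝ) (hk : ∀ i, 0 < k i) :
    ∀ j : Fin 10, cascadeF k j ∈ Ideal.span (Set.range (cascadeB k)) := by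
  have hb : ∀ i : Fin 6, cascadeB k i ∈ Ideal.span (Set.range (cascadeB k)) :=
    fun i => Ideal.subset_span ⟨i, rfl⟩
  have eb0 : cascadeB k 0 = C (k 0) * X 0 * X 4 - C (k 1 + k 2) * X 6 := rfl
  have eb1 : cascadeB k 1 = C (k 3) * X 1 * X 5 - C (k 4 + k 5) * X 8 := rfl
  have eb2 : cascadeB k 2 = C (k 6) * X 1 * X 2 - C (k 7 + k 8) * X 7 := rfl
  have eb3 : cascadeB k 3 = C (k 9) * X 3 * X 5 - C (k 10 + k 11) * X 9 := rfl
  have eb4 : cascadeB k 4 = C (k 2) * X 6 - C (k 5) * X 8 := rfl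
  have eb5 : cascadeB k 5 = C (k 8) * X 7 - C (k 11) * X 9 := rfl
  have m0 : cascadeF k 0 ∈ Ideal.span (Set.range (cascadeB k)) := by
    have ef : cascadeF k 0 = -(C (k 0) * X 0 * X 4) + C (k 1) * X 6 + C (k 5) * X 8 := rfl
    have h : cascadeF k 0 = -(cascadeB k 0) - cascadeB k 4 := by
      rw [ef, eb0, eb4]; simp only [C_add]; ring
    rw [h]; exact sub_mem (neg_mem (hb 0)) (hb 4)
  have m1 : cascadeF k 1 ∈ Ideal.span (Set.range (cascadeB k)) := by
    have ef : cascadeF k 1 = C (k 2) * X 6 - C (k 3) * X 1 * X 5 + C (k 4) * X 8 - C (k 6) * X 1 * X 2 + C (k 7) * X 7 + C (k 8) * X 7 := rfl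
    have h : cascadeF k 1 = cascadeB k 4 - cascadeB k 1 - cascadeB k 2 := by
      rw [ef, eb4, eb1, eb2]; simp only [C_add]; ring
    rw [h]; exact sub_mem (sub_mem (hb 4) (hb 1)) (hb 2)
  have m2 : cascadeF k 2 ∈ Ideal.span (Set.range (cascadeB k)) := by
    have ef : cascadeF k 2 = -(C (k 6) * X 1 * X 2) + C (k 7) * X 7 + C (k 11) * X 9 := rfl
    have h : cascadeF k 2 = -(cascadeB k 2) - cascadeB k 5 := by
      rw [ef, eb2, eb5]; simp only [C_add]; ring
    rw [h]; exact sub_mem (neg_mem (hb 2)) (hb 5)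
  have m3 : cascadeF k 3 ∈ Ideal.span (Set.range (cascadeB k)) := by
    have ef : cascadeF k 3 = C (k 8) * X 7 - C (k 9) * X 3 * X 5 + C (k 10) * X 9 := rfl
    have h : cascadeF k 3 = cascadeB k 5 - cascadeB k 3 := by
      rw [ef, eb5, eb3]; simp only [C_add]; ring
    rw [h]; exact sub_mem (hb 5) (hb 3)
  have m4 : cascadeF k 4 ∈ Ideal.span (Set.range (cascadeB k)) := by
    have ef : cascadeF k 4 = -(C (k 0) * X 0 * X 4) + C (k 1) * X 6 + C (k 2) * X 6 := rfl
    have h : cascadeF k 4 = -(cascadeB k 0) := by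
      rw [ef, eb0]; simp only [C_add]; ring
    rw [h]; exact neg_mem (hb 0)
  have m5 : cascadeF k 5 ∈ Ideal.span (Set.range (cascadeB k)) := by
    have ef : cascadeF k 5 = -(C (k 3) * X 1 * X 5) + C (k 4) * X 8 + C (k 5) * X 8 - C (k 9) * X 3 * X 5 + C (k 10) * X 9 + C (k 11) * X 9 := rfl
    have h : cascadeF k 5 = -(cascadeB k 1) - cascadeB k 3 := by
      rw [ef, eb1, eb3]; simp only [C_add]; ring
    rw [h]; exact sub_mem (neg_mem (hb 1)) (hb 3)
  have m6 : cascadeF k 6 ∈ Ideal.span (Set.range (cascadeB k)) := by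
    have ef : cascadeF k 6 = C (k 0) * X 0 * X 4 - C (k 1) * X 6 - C (k 2) * X 6 := rfl
    have h : cascadeF k 6 = cascadeB k 0 := by
      rw [ef, eb0]; simp only [C_add]; ring
    rw [h]; exact hb 0
  have m7 : cascadeF k 7 ∈ Ideal.span (Set.range (cascadeB k)) := by
    have ef : cascadeF k 7 = C (k 6) * X 1 * X 2 - C (k 7) * X 7 - C (k 8) * X 7 := rfl
    have h : cascadeF k 7 = cascadeB k 2 := by
      rw [ef, eb2]; simp only [C_add]; ring
    rw [h]; exact hb 2
  have m8 : cascadeF k 8 ∈ Ideal.span (Set.range (cascadeB k)) := by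
    have ef : cascadeF k 8 = C (k 3) * X 1 * X 5 - C (k 4) * X 8 - C (k 5) * X 8 := rfl
    have h : cascadeF k 8 = cascadeB k 1 := by
      rw [ef, eb1]; simp only [C_add]; ring
    rw [h]; exact hb 1
  have m9 : cascadeF k 9 ∈ Ideal.span (Set.range (cascadeB k)) := by
    have ef : cascadeF k 9 = C (k 9) * X 3 * X 5 - C (k 10) * X 9 - C (k 11) * X 9 := rfl
    have h : cascadeF k 9 = cascadeB k 3 := by
      rw [ef, eb3]; simp only [C_add]; ring
    rw [h]; exact hb 3
  intro j
  fin_cases j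
  · exact m0
  · exact m1
  · exact m2
  · exact m3
  · exact m4
  · exact m5
  · exact m6
  · exact m7
  · exact m8
  · exact m9
end

section
/- Conversely, for the 2-layer cascade of Example 2.1, each of the six binomials k₁x₁x₅ − (k₂+k₃)x₇, k₄x₂x₆ − (k₅+k₆)x₉, k₇x₂x₃ − (k₈+k₉)x₈, k₁₀x₄x₆ − (k₁₁+k₁₂)x₁₀, k₃x₇ − k₆x₉, k₉x₈ − k₁₂x₁₀ lies in the steady state ideal generated by the ten mass-action rate polynomials f₁,…,f₁₀. -/
open MvPolynomial

/-- Conversely, each of the six binomials lies in the steady state ideal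
generated by the ten mass-action rate polynomials of the 2-layer cascade. -/
theorem binomials_mem_steady_state_ideal (k : Fin 12 → ℝ) (hk : ∀ i, 0 < k i) :
    ∀ j : Fin 6, cascadeB k j ∈ Ideal.span (Set.range (cascadeF k)) := by
  have hf : ∀ i : Fin 10, cascadeF k i ∈ Ideal.span (Set.range (cascadeF k)) :=
    fun i => Ideal.subset_span ⟨i, rfl⟩
  intro j
  fin_cases j
  · have e : cascadeB k 0 = cascadeF k 6 := by
      show C (k 0) * X 0 * X 4 - C (k 1 + k 2) * X 6
        = C (k 0) * X 0 * X 4 - C (k 1) * X 6 - C (k 2) * X 6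
      rw [C_add]; ring
    exact e ▸ hf 6
  · have e : cascadeB k 1 = cascadeF k 8 := by
      show C (k 3) * X 1 * X 5 - C (k 4 + k 5) * X 8
        = C (k 3) * X 1 * X 5 - C (k 4) * X 8 - C (k 5) * X 8
      rw [C_add]; ring
    exact e ▸ hf 8
  · have e : cascadeB k 2 = cascadeF k 7 := by
      show C (k 6) * X 1 * X 2 - C (k 7 + k 8) * X 7
        = C (k 6) * X 1 * X 2 - C (k 7) * X 7 - C (k 8) * X 7
      rw [C_add]; ring
    exact e ▸ hf 7
  · have e : cascadeB k 3 = cascadeF k 9 := by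
      show C (k 9) * X 3 * X 5 - C (k 10 + k 11) * X 9
        = C (k 9) * X 3 * X 5 - C (k 10) * X 9 - C (k 11) * X 9
      rw [C_add]; ring
    exact e ▸ hf 9
  · have e : cascadeB k 4 = -(cascadeF k 0 + cascadeF k 6) := by
      show C (k 2) * X 6 - C (k 5) * X 8
        = -((-(C (k 0) * X 0 * X 4) + C (k 1) * X 6 + C (k 5) * X 8)
            + (C (k 0) * X 0 * X 4 - C (k 1) * X 6 - C (k 2) * X 6))
      ring
    exact e ▸ neg_mem (add_mem (hf 0) (hf 6))
  · have e : cascadeB k 5 = -(cascadeF k 2 + cascadeF k 7) := by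
      show C (k 8) * X 7 - C (k 11) * X 9
        = -((-(C (k 6) * X 1 * X 2) + C (k 7) * X 7 + C (k 11) * X 9)
            + (C (k 6) * X 1 * X 2 - C (k 7) * X 7 - C (k 8) * X 7))
      ring
    exact e ▸ neg_mem (add_mem (hf 2) (hf 7))
end

section
/- Each of the six columns of the matrix M given in Section 2 of the paper lies in the kernel of the stoichiometric matrix N of the 2-layer cascade, and has all entries nonnegative; moreover the six columns are linearly independent and span ker(N). -/
/-- The 10 × 12 stoichiometric matrix of the 2-layer cascade of Example 2.1. -/
def cascadeN : Matrix (Fin 10) (Fin 12) ℝ :=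
  !![-1,1,0,0,0,1,0,0,0,0,0,0;
     0,0,1,-1,1,0,-1,1,1,0,0,0;
     0,0,0,0,0,0,-1,1,0,0,0,1;
     0,0,0,0,0,0,0,0,1,-1,1,0;
     -1,1,1,0,0,0,0,0,0,0,0,0;
     0,0,0,-1,1,1,0,0,0,-1,1,1;
     1,-1,-1,0,0,0,0,0,0,0,0,0;
     0,0,0,0,0,0,1,-1,-1,0,0,0;
     0,0,0,1,-1,-1,0,0,0,0,0,0;
     0,0,0,0,0,0,0,0,0,1,-1,-1]

/-- The vector of educt complex monomials of the 2-layer cascade: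
`φ(x) = (x₁x₅, x₇, x₇, x₂x₆, x₉, x₉, x₂x₃, x₈, x₈, x₄x₆, x₁₀, x₁₀)`. -/
def cascadePhi (x : Fin 10 → ℝ) : Fin 12 → ℝ :=
  ![x 0 * x 4, x 6, x 6, x 1 * x 5, x 8, x 8, x 1 * x 2, x 7, x 7,
    x 3 * x 5, x 9, x 9]

/-- The 12 × 6 nonnegative matrix whose columns generate the cone
`ker(N) ∩ ℝ^{12}_{≥0}` for the 2-layer cascade. -/
def cascadeM : Matrix (Fin 12) (Fin 6) ℝ :=
  !![1,0,0,0,1,0;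
     1,0,0,0,0,0;
     0,0,0,0,1,0;
     0,1,0,0,1,0;
     0,1,0,0,0,0;
     0,0,0,0,1,0;
     0,0,1,0,0,1;
     0,0,1,0,0,0;
     0,0,0,0,0,1;
     0,0,0,1,0,1;
     0,0,0,1,0,0;
     0,0,0,0,0,1]

/-!
On `ker N` the six fluxes `v₁, v₄, v₇, v₁₀, v₂, v₈` (indices from `0`) are free: rows 0, 2 and
6–9 of `N` express the other six through them, and the rows of `M` at these indices form the
identity matrix. Hence `c ↦ M c` and `v ↦ (v₁, v₄, v₇, v₁₀, v₂, v₈)` are mutually inverse between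
`ℝ⁶` and `ker N`, which gives linear independence and spanning at once.
-/

namespace Matrix

variable {l m n R : Type*} [CommRing R]

theorem mulVec_col_eq_zero_of_mul_eq_zero [Fintype m] {N : Matrix l m R} {M : Matrix m n R}
    (hNM : N * M = 0) (j : n) : N *ᵥ M.col j = 0 :=
  funext fun i => congrFun (congrFun hNM i) j

theorem mulVec_comp_of_submatrix_eq_one [Fintype n] [DecidableEq n] {M : Matrix m n R}
    {r : n → m} (hr : M.submatrix r id = 1) (c : n → R) : (M *ᵥ c) ∘ r = c := by
  change M.submatrix r id *ᵥ c = c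
  rw [hr, one_mulVec]

theorem linearIndependent_col_of_submatrix_eq_one [Fintype n] [DecidableEq n] {M : Matrix m n R}
    {r : n → m} (hr : M.submatrix r id = 1) : LinearIndependent R M.col :=
  mulVec_injective_iff.mp <| Function.LeftInverse.injective (g := (· ∘ r)) <|
    mulVec_comp_of_submatrix_eq_one hr

theorem ker_mulVecLin_eq_span_col [Fintype m] [Fintype n] {N : Matrix l m R} {M : Matrix m n R}
    (hNM : N * M = 0) {r : n → m} (hr : ∀ v, N *ᵥ v = 0 → M *ᵥ (v ∘ r) = v) :
    LinearMap.ker N.mulVecLin = Submodule.span R (Set.range M.col) := by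
  rw [← range_mulVecLin]
  apply le_antisymm
  · intro v hv
    exact ⟨v ∘ r, hr v hv⟩
  · rintro _ ⟨c, rfl⟩
    simp [mulVec_mulVec, hNM]

end Matrix

open Matrix

theorem cascadeN_mul_cascadeM : cascadeN * cascadeM = 0 := by
  ext i j
  fin_cases i <;> fin_cases j <;> simp [cascadeN, cascadeM, mul_apply, Fin.sum_univ_succ]

theorem cascadeM_nonneg (i : Fin 12) (j : Fin 6) : 0 ≤ cascadeM i j := by
  fin_cases i <;> fin_cases j <;> simp [cascadeM]

def cascadeFreeCoords : Fin 6 → Fin 12 := ![1, 4, 7, 10, 2, 8]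

theorem cascadeM_submatrix_freeCoords : cascadeM.submatrix cascadeFreeCoords id = 1 := by
  ext i j
  fin_cases i <;> fin_cases j <;> simp [cascadeM, cascadeFreeCoords]

theorem cascadeM_mulVec_freeCoords (v : Fin 12 → ℝ) (hv : cascadeN *ᵥ v = 0) :
    cascadeM *ᵥ (v ∘ cascadeFreeCoords) = v := by
  have row (k : Fin 10) := congrFun hv k
  have e0 : -v 0 + (v 1 + v 5) = 0 := by
    simpa [cascadeN, mulVec, dotProduct, Fin.sum_univ_succ] using row 0
  have e2 : -v 6 + (v 7 + v 11) = 0 := by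
    simpa [cascadeN, mulVec, dotProduct, Fin.sum_univ_succ] using row 2
  have e6 : v 0 + (-v 1 + -v 2) = 0 := by
    simpa [cascadeN, mulVec, dotProduct, Fin.sum_univ_succ] using row 6
  have e7 : v 6 + (-v 7 + -v 8) = 0 := by
    simpa [cascadeN, mulVec, dotProduct, Fin.sum_univ_succ] using row 7
  have e8 : v 3 + (-v 4 + -v 5) = 0 := by
    simpa [cascadeN, mulVec, dotProduct, Fin.sum_univ_succ] using row 8
  have e9 : v 9 + (-v 10 + -v 11) = 0 := by
    simpa [cascadeN, mulVec, dotProduct, Fin.sum_univ_succ] using row 9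
  have h0 : v 0 = v 1 + v 2 := by linarith
  have h3 : v 3 = v 4 + v 2 := by linarith
  have h5 : v 5 = v 2 := by linarith
  have h6 : v 6 = v 7 + v 8 := by linarith
  have h9 : v 9 = v 10 + v 8 := by linarith
  have h11 : v 11 = v 8 := by linarith
  ext i
  fin_cases i <;>
    simp [cascadeM, cascadeFreeCoords, mulVec, dotProduct, Fin.sum_univ_succ,
      h0, h3, h5, h6, h9, h11]

/-- Each column of `M` lies in the kernel of the stoichiometric matrix `N`
and has nonnegative entries; moreover the six columns are linearly
independent and span `ker(N)`. -/
theorem cascadeM_columns_generate_kernel :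
    (∀ j : Fin 6, cascadeN.mulVec (fun i => cascadeM i j) = 0) ∧
    (∀ i j, 0 ≤ cascadeM i j) ∧
    LinearIndependent ℝ (fun j : Fin 6 => (fun i => cascadeM i j : Fin 12 → ℝ)) ∧
    (∀ v : Fin 12 → ℝ, cascadeN.mulVec v = 0 ↔
      v ∈ Submodule.span ℝ
        (Set.range (fun j : Fin 6 => (fun i => cascadeM i j : Fin 12 → ℝ)))) := by
  exact ⟨mulVec_col_eq_zero_of_mul_eq_zero cascadeN_mul_cascadeM, cascadeM_nonneg,
    linearIndependent_col_of_submatrix_eq_one cascadeM_submatrix_freeCoords,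
    SetLike.ext_iff.mp (ker_mulVecLin_eq_span_col cascadeN_mul_cascadeM cascadeM_mulVec_freeCoords)⟩
end

section
/- Let A ∈ ℝ^{w×s} and N ∈ ℝ^{s×r}. If there exist nonzero vectors α ∈ Rowspan(A) and σ ∈ ColumnSpan(N) with sign(αᵢ) = sign(σᵢ) for all i, and one defines x¹ᵢ = σᵢ/(e^{αᵢ}−1) for αᵢ ≠ 0 and x¹ᵢ = x̄ᵢ > 0 for αᵢ = 0, and x²ᵢ = e^{αᵢ} x¹ᵢ, then x¹, x² ∈ ℝ^s_{>0}, x¹ ≠ x², and x² − x¹ ∈ ColumnSpan(N). -/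
/-- The linear-algebraic content of Theorem 2.1: if nonzero `α ∈ Rowspan(A)`
and `σ ∈ ColumnSpan(N)` have the same coordinatewise sign, then
`x¹ᵢ = σᵢ/(e^{αᵢ}−1)` (for `αᵢ ≠ 0`, arbitrary positive `x̄ᵢ` otherwise) and
`x²ᵢ = e^{αᵢ} x¹ᵢ` are two distinct positive vectors with
`x² − x¹ ∈ ColumnSpan(N)`. -/
theorem two_positive_states (w s r : ℕ)
    (A : Matrix (Fin w) (Fin s) ℝ) (N : Matrix (Fin s) (Fin r) ℝ)
    (α σ : Fin s → ℝ)
    (hαspan : ∃ c : Fin w → ℝ, α = Matrix.vecMul c A)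
    (hσspan : ∃ d : Fin r → ℝ, σ = N.mulVec d)
    (hα0 : α ≠ 0) (hσ0 : σ ≠ 0)
    (hsign : ∀ i, Real.sign (α i) = Real.sign (σ i))
    (xbar : Fin s → ℝ) (hxbar : ∀ i, 0 < xbar i)
    (x1 x2 : Fin s → ℝ)
    (hx1 : ∀ i, x1 i = if α i = 0 then xbar i else σ i / (Real.exp (α i) - 1))
    (hx2 : ∀ i, x2 i = Real.exp (α i) * x1 i) :
    (∀ i, 0 < x1 i) ∧ (∀ i, 0 < x2 i) ∧ x1 ≠ x2 ∧
      ∃ d : Fin r → ℝ, x2 - x1 = N.mulVec d := by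
  have hpos : ∀ i, 0 < x1 i := by
    intro i
    rw [hx1 i]
    by_cases h : α i = 0
    · simpa [h] using hxbar i
    · simp only [h, if_false]
      rcases lt_or_gt_of_ne h with hlt | hgt
      · have hσi : σ i < 0 := by
          have := hsign i
          rw [Real.sign_of_neg hlt] at this
          by_contra hc
          push_neg at hc
          rcases eq_or_lt_of_le hc with he | hl
          · rw [← he, Real.sign_zero] at this; norm_num at this
          · rw [Real.sign_of_pos hl] at this; norm_num at this
        have hd : Real.exp (α i) - 1 < 0 := by
          have : Real.exp (α i) < 1 := by
            rw [← Real.exp_zero]; exact Real.exp_lt_exp.mpr hlt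
          linarith
        exact div_pos_of_neg_of_neg hσi hd
      · have hσi : 0 < σ i := by
          have := hsign i
          rw [Real.sign_of_pos hgt] at this
          by_contra hc
          push_neg at hc
          rcases eq_or_lt_of_le hc with he | hl
          · rw [he, Real.sign_zero] at this; norm_num at this
          · rw [Real.sign_of_neg hl] at this; norm_num at this
        have hd : 0 < Real.exp (α i) - 1 := by
          have : 1 < Real.exp (α i) := by
            rw [← Real.exp_zero]; exact Real.exp_lt_exp.mpr hgt
          linarith
        exact div_pos hσi hd
  refine ⟨hpos, fun i => by rw [hx2 i]; exact mul_pos (Real.exp_pos _) (hpos i), ?_, ?_⟩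
  · -- x1 ≠ x2
    obtain ⟨i, hi⟩ : ∃ i, α i ≠ 0 := by
      by_contra hc
      push_neg at hc
      exact hα0 (funext hc)
    intro heq
    have : x2 i = x1 i := by rw [heq]
    rw [hx2 i] at this
    have hexp : Real.exp (α i) ≠ 1 := fun hc => hi (by simpa using hc)
    have hp := hpos i
    have : (Real.exp (α i) - 1) * x1 i = 0 := by linarith
    rcases mul_eq_zero.mp this with h | h
    · exact hexp (by linarith)
    · linarith
  · obtain ⟨d, hd⟩ := hσspan
    refine ⟨d, ?_⟩
    rw [← hd]
    funext i
    simp only [Pi.sub_apply]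
    rw [hx2 i, hx1 i]
    by_cases h : α i = 0
    · have hσi : σ i = 0 := by
        have := hsign i
        rw [h, Real.sign_zero] at this
        exact (Real.sign_eq_zero_iff.mp this.symm)
      simp [h, hσi]
    · have hne : Real.exp (α i) - 1 ≠ 0 := by
        intro hc
        apply h
        have : Real.exp (α i) = 1 := by linarith
        simpa using this
      simp only [h, if_false]
      field_simp
end

section
/- Suppose the steady state ideal of a mass-action system is generated by binomials of the form b_i x^{ŷ_j} − b_j x^{ŷ_i} with b_i, b_j > 0, and A is a matrix whose kernel contains all differences ŷ_j − ŷ_i. If x¹ ∈ ℝ^s_{>0} is a common zero of all these binomials and α ∈ Rowspan(A), then x² := diag(e^α)x¹ is also a common zero of all these binomials. -/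
/-- If the steady state ideal is generated by binomials
`bᵢ x^{ŷⱼ} − bⱼ x^{ŷᵢ}` with positive coefficients, `ker(A)` contains all
differences `ŷⱼ − ŷᵢ`, `x¹ > 0` is a common zero of the binomials, and
`α ∈ Rowspan(A)`, then `x² = diag(e^α) x¹` is also a common zero of all the
binomials. -/
theorem toric_scaling_preserves_steady_states (w s : ℕ) {ι : Type*}
    (A : Matrix (Fin w) (Fin s) ℝ)
    (b1 b2 : ι → ℝ) (hb1 : ∀ t, 0 < b1 t) (hb2 : ∀ t, 0 < b2 t)
    (y1 y2 : ι → Fin s → ℕ)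
    (hker : ∀ t, A.mulVec (fun i => (y2 t i : ℝ) - (y1 t i : ℝ)) = 0)
    (x1 : Fin s → ℝ) (hx1 : ∀ i, 0 < x1 i)
    (hzero : ∀ t, b1 t * ∏ i, x1 i ^ y2 t i - b2 t * ∏ i, x1 i ^ y1 t i = 0)
    (α : Fin s → ℝ) (hα : ∃ c : Fin w → ℝ, α = Matrix.vecMul c A)
    (x2 : Fin s → ℝ) (hx2 : ∀ i, x2 i = Real.exp (α i) * x1 i) :
    ∀ t, b1 t * ∏ i, x2 i ^ y2 t i - b2 t * ∏ i, x2 i ^ y1 t i = 0 := by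
  intro t
  obtain ⟨c, hc⟩ := hα
  have hdot : ∑ i, α i * ((y2 t i : ℝ) - (y1 t i : ℝ)) = 0 := by
    have : dotProduct α (fun i => (y2 t i : ℝ) - (y1 t i : ℝ)) = 0 := by
      rw [hc, ← Matrix.dotProduct_mulVec, hker t, dotProduct_zero]
    simpa [dotProduct] using this
  have key : ∀ y : Fin s → ℕ,
      (∏ i, x2 i ^ y i) = Real.exp (∑ i, α i * (y i : ℝ)) * ∏ i, x1 i ^ y i := by
    intro y
    rw [Real.exp_sum, ← Finset.prod_mul_distrib]
    refine Finset.prod_congr rfl fun i _ => ?_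
    rw [hx2 i, mul_pow, ← Real.exp_nat_mul, mul_comm (y i : ℝ)]
  have hE : Real.exp (∑ i, α i * (y2 t i : ℝ)) = Real.exp (∑ i, α i * (y1 t i : ℝ)) := by
    have : ∑ i, α i * (y2 t i : ℝ) = ∑ i, α i * (y1 t i : ℝ) := by
      have := hdot
      rw [← sub_eq_zero]
      simpa [mul_sub, Finset.sum_sub_distrib] using this
    rw [this]
  rw [key, key, hE]
  have := hzero t
  nlinarith [this, Real.exp_pos (∑ i, α i * (y1 t i : ℝ))]
end
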